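/- Let n ≥ 2, 0 ≤ s ≤ n, and ε > 0. For e ∈ S^{n-1} and a finite set P ⊆ ℝ^n, define E_e(P) = |{(x,y) ∈ P × P : |⟨x, e⟩ − ⟨y, e⟩| ≤ δ}|. Then there exist a constant C ≥ 1 depending only on n and s, and δ_0 > 0 depending only on n, s and ε, such that for all 0 < δ < δ_0 and every (δ^{-ε}, δ, s)-set P ⊆ B(0,1) ⊆ ℝ^n: ∫_{S^{n-1}} E_e(P) dσ(e) ≤ C δ^{1 - 2s - 2ε} if 1 < s ≤ n, and ∫_{S^{n-1}} E_e(P) dσ(e) ≤ C δ^{-s - 3ε} if 0 ≤ s ≤ 1. -/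

import Mathlib

open Metric MeasureTheory ENNReal

/-- The uniform (rotation-invariant) probability measure on the unit sphere
`S^{n-1} ⊆ ℝ^n`, obtained by normalising the surface measure `volume.toSphere`. -/
noncomputable def sphereMeasure (n : ℕ) :
    Measure (sphere (0 : EuclideanSpace ℝ (Fin n)) 1) :=
  ((volume : Measure (EuclideanSpace ℝ (Fin n))).toSphere Set.univ)⁻¹ •
    (volume : Measure (EuclideanSpace ℝ (Fin n))).toSphere

/-- `coverNum A δ` is the least number of closed balls of radius `δ` needed to cover `A`
(as a value in `ℝ≥0∞`; it is `⊤` if no finite cover exists). -/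
noncomputable def coverNum {X : Type*} [PseudoMetricSpace X] (A : Set X) (δ : ℝ) : ℝ≥0∞ :=
  ⨅ (s : Finset X) (_ : A ⊆ ⋃ x ∈ s, closedBall x δ), (s.card : ℝ≥0∞)

/-- The `s`-dimensional Hausdorff content `H^s_∞`. -/
noncomputable def hausdorffContent {n : ℕ} (s : ℝ) (A : Set (EuclideanSpace ℝ (Fin n))) : ℝ≥0∞ :=
  ⨅ (U : ℕ → Set (EuclideanSpace ℝ (Fin n))) (_ : A ⊆ ⋃ i, U i), ∑' i, EMetric.diam (U i) ^ s

/-- A finite set `P ⊆ ℝ^n` is a `(C,δ,s)`-set if `|P ∩ B(x,r)| ≤ C (r/δ)^s` for all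
`x ∈ ℝ^n` and all `δ ≤ r ≤ 1`, where `B(x,r)` is the closed ball. -/
def IsDeltaSet {n : ℕ} (C δ s : ℝ) (P : Finset (EuclideanSpace ℝ (Fin n))) : Prop :=
  ∀ (x : EuclideanSpace ℝ (Fin n)) (r : ℝ), δ ≤ r → r ≤ 1 →
    (((P : Set (EuclideanSpace ℝ (Fin n))) ∩ closedBall x r).ncard : ℝ) ≤ C * (r / δ) ^ s

/-- `energyCount δ e P` is the number of pairs `(x,y) ∈ P × P` with `|⟨x,e⟩ - ⟨y,e⟩| ≤ δ`. -/
noncomputable def energyCount {n : ℕ} (δ : ℝ) (e : EuclideanSpace ℝ (Fin n))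
    (P : Finset (EuclideanSpace ℝ (Fin n))) : ℕ :=
  {p : EuclideanSpace ℝ (Fin n) × EuclideanSpace ℝ (Fin n) |
    p.1 ∈ P ∧ p.2 ∈ P ∧ |(inner ℝ p.1 e : ℝ) - (inner ℝ p.2 e : ℝ)| ≤ δ}.ncard

/-!
The energy integral is a sum over pairs, `∫ E_e(P) dσ = ∑_{x,y ∈ P} σ{e : |⟨x - y, e⟩| ≤ δ}`.
The cone over such a band of the sphere lies in a slab of width `2δ/|x - y|` inside the unit
ball, so each term is `≲ δ / max(|x - y|, δ)`. Splitting the `y`-sum over the dyadic balls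
`B(x, 2^k δ)` and applying the `(C,δ,s)`-condition on each gives `≲ C ∑_k 2^{k(s-1)}`: a
geometric sum that is `≲ δ^{1-s}` when `s > 1`, and at most the number `≈ log(1/δ)` of scales
when `s ≤ 1`. It remains to use `|P| ≤ C δ^{-s}`, and `log(1/δ) ≤ δ^{-ε}` for small `δ`.
-/

open scoped RealInnerProductSpace Pointwise

local notation "𝔼" n => EuclideanSpace ℝ (Fin n)

section Dyadic

open Finset

theorem div_max_le_sum_dyadic {δ r : ℝ} (hδ : 0 < δ) {N : ℕ} (hr : r ≤ 2 ^ N * δ) :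
    δ / max r δ ≤ ∑ k ∈ range (N + 1), 2 / 2 ^ k * if r ≤ 2 ^ k * δ then 1 else 0 := by
  have hterm : ∀ k ∈ range (N + 1), 0 ≤ 2 / (2 : ℝ) ^ k * if r ≤ 2 ^ k * δ then 1 else 0 :=
    fun k _ => by positivity
  by_cases hrδ : r ≤ δ
  · refine le_trans ?_ (single_le_sum hterm (mem_range.mpr N.succ_pos))
    simp [hrδ, hδ.ne']
  have hex : ∃ j, r ≤ 2 ^ j * δ := ⟨N, hr⟩
  set j := Nat.find hex
  have hj0 : j ≠ 0 := fun h => hrδ (by simpa using (Nat.find_eq_zero hex).mp h)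
  have hrj : 2 ^ (j - 1) * δ < r := not_le.mp (Nat.find_min hex (Nat.sub_one_lt hj0))
  have hjN : j < N + 1 := Nat.lt_succ_of_le (Nat.find_min' hex hr)
  refine le_trans ?_ (single_le_sum hterm (mem_range.mpr hjN))
  rw [if_pos (Nat.find_spec hex), mul_one, max_eq_left (not_le.mp hrδ).le,
    div_le_div_iff₀ (hδ.trans (not_le.mp hrδ)) (by positivity)]
  have : (2 : ℝ) ^ j = 2 * 2 ^ (j - 1) := by rw [← pow_succ', Nat.sub_one_add_one hj0]
  rw [this]
  nlinarith

theorem sum_div_max_dist_le {E : Type*} [PseudoMetricSpace E] (P : Finset E) (x : E)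
    {C δ s : ℝ} (hδ : 0 < δ) {N : ℕ} (hP : ∀ y ∈ P, dist x y ≤ 2 ^ N * δ)
    (hcount : ∀ r, δ ≤ r → (((P : Set E) ∩ closedBall x r).ncard : ℝ) ≤ C * (r / δ) ^ s) :
    ∑ y ∈ P, δ / max (dist x y) δ ≤ 2 * C * ∑ k ∈ range (N + 1), ((2 : ℝ) ^ (s - 1)) ^ k := by
  classical
  calc ∑ y ∈ P, δ / max (dist x y) δ
      ≤ ∑ y ∈ P, ∑ k ∈ range (N + 1), 2 / 2 ^ k * if dist x y ≤ 2 ^ k * δ then 1 else 0 :=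
        sum_le_sum fun y hy => div_max_le_sum_dyadic hδ (hP y hy)
    _ = ∑ k ∈ range (N + 1), 2 / 2 ^ k * (((P : Set E) ∩ closedBall x (2 ^ k * δ)).ncard : ℝ) := by
        rw [sum_comm]
        refine sum_congr rfl fun k _ => ?_
        rw [← mul_sum, sum_boole, ← Set.ncard_coe_finset, coe_filter]
        congr 3
        ext y
        simp [dist_comm]
    _ ≤ ∑ k ∈ range (N + 1), 2 / 2 ^ k * (C * ((2 : ℝ) ^ k) ^ s) := by
        gcongr with k
        simpa [hδ.ne'] using hcount _ (le_mul_of_one_le_left hδ.le (one_le_pow₀ one_le_two))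
    _ = 2 * C * ∑ k ∈ range (N + 1), ((2 : ℝ) ^ (s - 1)) ^ k := by
        rw [mul_sum]
        refine sum_congr rfl fun k _ => ?_
        rw [Real.rpow_pow_comm zero_le_two, Real.rpow_sub_one (by positivity)]
        field_simp

end Dyadic

open Filter Topology in
theorem eventually_natCast_add_three_le_rpow_neg {ε : ℝ} (hε : 0 < ε) :
    ∀ᶠ δ in 𝓝[>] (0 : ℝ), ∀ m : ℕ, 2 ^ m ≤ δ⁻¹ → (m : ℝ) + 3 ≤ δ ^ (-ε) := by
  have hlog := (isLittleO_log_rpow_nhdsGT_zero (neg_lt_zero.2 hε)).bound (c := 1 / 4) (by norm_num)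
  have hlarge := (tendsto_rpow_neg_nhdsGT_zero (neg_lt_zero.2 hε)).eventually_ge_atTop 6
  filter_upwards [hlog, hlarge, self_mem_nhdsWithin] with δ hlog hlarge (hδ : 0 < δ) m hm
  rw [Real.norm_eq_abs, Real.norm_of_nonneg (by positivity)] at hlog
  have hm_log : m * Real.log 2 ≤ -Real.log δ := by
    rw [← Real.log_inv, ← Real.log_pow]
    exact Real.log_le_log (by positivity) hm
  have := Real.log_two_gt_d9
  nlinarith [neg_le_abs (Real.log δ), (Nat.cast_nonneg m : (0 : ℝ) ≤ m)]

-- A reflection takes `u` to a coordinate vector, and then the slab lies in a box.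
theorem volume_slab_inter_closedBall_le {ι : Type*} [Fintype ι] [DecidableEq ι]
    (u : EuclideanSpace ℝ ι) (hu : ‖u‖ = 1) (a : ℝ) :
    volume ({x | |⟪u, x⟫| ≤ a} ∩ closedBall (0 : EuclideanSpace ℝ ι) 1) ≤
      ENNReal.ofReal (2 * a) * ENNReal.ofReal 2 ^ (Fintype.card ι - 1) := by
  obtain ⟨i₀⟩ : Nonempty ι := by
    by_contra h
    rw [not_nonempty_iff] at h
    simp [Subsingleton.elim u 0] at hu
  set R := (ℝ ∙ (u - EuclideanSpace.single i₀ (1 : ℝ)))ᗮ.reflection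
  have hRu : R u = EuclideanSpace.single i₀ 1 := Submodule.reflection_sub (by simp [hu])
  let c : ι → ℝ := Function.update (fun _ => 1) i₀ a
  let box : Set (ι → ℝ) := Set.univ.pi fun i => Set.Icc (-c i) (c i)
  have hsub : {x | |⟪u, x⟫| ≤ a} ∩ closedBall 0 1 ⊆
      R ⁻¹' ((MeasurableEquiv.toLp 2 (ι → ℝ)).symm ⁻¹' box) := by
    rintro x ⟨hux, hx⟩ i -
    rcases eq_or_ne i i₀ with rfl | hi
    · have : (R x) i = ⟪u, x⟫ := by
        rw [← R.inner_map_map, hRu, EuclideanSpace.inner_single_left]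
        simp
      simpa [c, this, abs_le] using hux
    · have : |(R x) i| ≤ 1 := (PiLp.norm_apply_le _ i).trans
        ((R.norm_map x).trans_le (mem_closedBall_zero_iff.mp hx))
      simpa [c, hi, abs_le] using this
  have hbox : MeasurableSet box := MeasurableSet.univ_pi fun _ => measurableSet_Icc
  calc _ ≤ volume (R ⁻¹' ((MeasurableEquiv.toLp 2 (ι → ℝ)).symm ⁻¹' box)) := measure_mono hsub
    _ = volume box := by
      rw [R.measurePreserving.measure_preimage (hbox.preimage (by fun_prop)).nullMeasurableSet,
        (EuclideanSpace.volume_preserving_symm_measurableEquiv_toLp ι).measure_preimage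
          hbox.nullMeasurableSet]
    _ = ∏ i, Function.update (fun _ => ENNReal.ofReal 2) i₀ (ENNReal.ofReal (2 * a)) i := by
      rw [volume_pi_pi]
      refine Finset.prod_congr rfl fun i _ => ?_
      rw [Real.volume_Icc]
      rcases eq_or_ne i i₀ with rfl | hi <;> simp [c, *, two_mul, one_add_one_eq_two]
    _ = _ := by
      rw [Finset.prod_update_of_mem (Finset.mem_univ i₀), Finset.prod_const,
        ← Finset.erase_eq, Finset.card_erase_of_mem (Finset.mem_univ i₀), Finset.card_univ]

section Sphere

variable {n : ℕ}

theorem volume_toSphere_univ :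
    (volume : Measure (𝔼 n)).toSphere Set.univ = n * volume (ball (0 : 𝔼 n) 1) := by
  rw [Measure.toSphere_apply_univ, finrank_euclideanSpace_fin]

theorem isProbabilityMeasure_sphereMeasure (hn : n ≠ 0) :
    IsProbabilityMeasure (sphereMeasure n) where
  measure_univ := by
    rw [sphereMeasure, Measure.smul_apply, smul_eq_mul, ENNReal.inv_mul_cancel] <;>
      rw [volume_toSphere_univ]
    · exact mul_ne_zero (by exact_mod_cast hn) (measure_ball_pos _ _ one_pos).ne'
    · exact mul_ne_top (natCast_ne_top n) measure_ball_lt_top.ne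

theorem sphereMeasure_real_abs_inner_le_le {v : 𝔼 n} (hv : v ≠ 0) {δ : ℝ} (hδ : 0 ≤ δ) :
    (sphereMeasure n).real {e | |⟪v, (e : 𝔼 n)⟫| ≤ δ} ≤
      2 ^ n / volume.real (ball (0 : 𝔼 n) 1) * (δ / ‖v‖) := by
  have hn : n ≠ 0 := by rintro rfl; exact hv (Subsingleton.elim _ _)
  have hv' : 0 < ‖v‖ := norm_pos_iff.mpr hv
  set A : Set (sphere (0 : 𝔼 n) 1) := {e | |⟪v, (e : 𝔼 n)⟫| ≤ δ}
  have hA : MeasurableSet A := measurableSet_le (by fun_prop) measurable_const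
  have hcone : Set.Ioo (0 : ℝ) 1 • ((↑) '' A) ⊆
      {x | |⟪‖v‖⁻¹ • v, x⟫| ≤ δ / ‖v‖} ∩ closedBall 0 1 := by
    rintro _ ⟨r, ⟨hr0, hr1⟩, _, ⟨e, he, rfl⟩, rfl⟩
    refine ⟨?_, ?_⟩
    · simp only [Set.mem_ofPred_eq, real_inner_smul_left, real_inner_smul_right, abs_mul,
        abs_inv, abs_norm, abs_of_pos hr0]
      rw [inv_mul_le_iff₀ hv', mul_div_cancel₀ _ hv'.ne']
      exact (mul_le_of_le_one_left (abs_nonneg _) hr1.le).trans he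
    · simp [norm_smul, abs_of_pos hr0, hr1.le]
  have hslab := volume_slab_inter_closedBall_le (‖v‖⁻¹ • v)
    (by rw [norm_smul, norm_inv, norm_norm, inv_mul_cancel₀ hv'.ne']) (δ / ‖v‖)
  have hcone_real : volume.real (Set.Ioo (0 : ℝ) 1 • ((↑) '' A : Set (𝔼 n))) ≤
      2 * (δ / ‖v‖) * 2 ^ (n - 1) := by
    have := ENNReal.toReal_mono (by finiteness) ((measure_mono hcone).trans hslab)
    simpa [measureReal_def, toReal_ofReal, hδ, hv'.le, div_nonneg] using this
  have hV : 0 < volume.real (ball (0 : 𝔼 n) 1) :=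
    toReal_pos (measure_ball_pos _ _ one_pos).ne' measure_ball_lt_top.ne
  rw [measureReal_def, sphereMeasure, Measure.smul_apply, smul_eq_mul, volume_toSphere_univ,
    Measure.toSphere_apply' _ hA, finrank_euclideanSpace_fin, toReal_mul, toReal_inv, toReal_mul,
    toReal_mul, ← measureReal_def, ← measureReal_def]
  calc _ ≤ ((n : ℝ≥0∞).toReal * volume.real (ball (0 : 𝔼 n) 1))⁻¹ *
        ((n : ℝ≥0∞).toReal * (2 * (δ / ‖v‖) * 2 ^ (n - 1))) := by gcongr
    _ = _ := by
      obtain ⟨k, rfl⟩ := Nat.exists_eq_succ_of_ne_zero hn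
      simp only [toReal_natCast, Nat.succ_sub_one, pow_succ]
      field_simp

noncomputable def sphereCapConst (n : ℕ) : ℝ :=
  max (2 ^ n / volume.real (ball (0 : 𝔼 n) 1)) 1

theorem one_le_sphereCapConst : 1 ≤ sphereCapConst n := le_max_right _ _

theorem sphereMeasure_real_abs_inner_sub_le (hn : n ≠ 0) (x y : 𝔼 n) {δ : ℝ} (hδ : 0 < δ) :
    (sphereMeasure n).real {e | |⟪x, (e : 𝔼 n)⟫ - ⟪y, e⟫| ≤ δ} ≤
      sphereCapConst n * (δ / max (dist x y) δ) := by
  have := isProbabilityMeasure_sphereMeasure hn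
  simp_rw [← inner_sub_left]
  rcases le_or_gt (dist x y) δ with hxy | hxy
  · rw [max_eq_right hxy, div_self hδ.ne', mul_one]
    exact measureReal_le_one.trans one_le_sphereCapConst
  · rw [dist_eq_norm] at hxy ⊢
    rw [max_eq_left hxy.le]
    exact (sphereMeasure_real_abs_inner_le_le (norm_pos_iff.mp (hδ.trans hxy)) hδ.le).trans
      (by gcongr; exact le_max_left _ _)

open Finset in
theorem energyCount_eq_sum (δ : ℝ) (e : 𝔼 n) (P : Finset (𝔼 n)) :
    (energyCount δ e P : ℝ) = ∑ x ∈ P, ∑ y ∈ P, if |⟪x, e⟫ - ⟪y, e⟫| ≤ δ then 1 else 0 := by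
  classical
  have hpairs : {p : (𝔼 n) × (𝔼 n) | p.1 ∈ P ∧ p.2 ∈ P ∧ |⟪p.1, e⟫ - ⟪p.2, e⟫| ≤ δ} =
      ↑((P ×ˢ P).filter fun p => |⟪p.1, e⟫ - ⟪p.2, e⟫| ≤ δ) := by
    ext
    simp [and_assoc]
  rw [energyCount, hpairs, Set.ncard_coe_finset, card_filter, sum_product]
  push_cast
  rfl

open Finset in
theorem integral_energyCount (hn : n ≠ 0) (δ : ℝ) (P : Finset (𝔼 n)) :
    ∫ e, (energyCount δ (e : 𝔼 n) P : ℝ) ∂(sphereMeasure n) =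
      ∑ x ∈ P, ∑ y ∈ P, (sphereMeasure n).real {e | |⟪x, (e : 𝔼 n)⟫ - ⟪y, e⟫| ≤ δ} := by
  have := isProbabilityMeasure_sphereMeasure hn
  have hmeas : ∀ x y : 𝔼 n,
      MeasurableSet {e : sphere (0 : 𝔼 n) 1 | |⟪x, (e : 𝔼 n)⟫ - ⟪y, e⟫| ≤ δ} :=
    fun x y => measurableSet_le (by fun_prop) measurable_const
  have hint : ∀ x y : 𝔼 n, Integrable (fun e : sphere (0 : 𝔼 n) 1 =>
      if |⟪x, (e : 𝔼 n)⟫ - ⟪y, e⟫| ≤ δ then (1 : ℝ) else 0) (sphereMeasure n) :=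
    fun x y => (integrable_const 1).indicator (hmeas x y)
  simp_rw [energyCount_eq_sum]
  rw [integral_finsetSum _ fun x _ => integrable_finsetSum _ fun y _ => hint x y]
  refine sum_congr rfl fun x _ => ?_
  rw [integral_finsetSum _ fun y _ => hint x y]
  exact sum_congr rfl fun y _ => integral_indicator_one (hmeas x y)

end Sphere

namespace IsDeltaSet

variable {n : ℕ} {C δ s : ℝ} {P : Finset (𝔼 n)}

theorem nonneg (h : IsDeltaSet C δ s P) (hδ : 0 < δ) (hδ1 : δ ≤ 1) : 0 ≤ C := by
  simpa [hδ.ne'] using (Nat.cast_nonneg _).trans (h 0 δ le_rfl hδ1)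

theorem card_le (h : IsDeltaSet C δ s P) (hP : (P : Set (𝔼 n)) ⊆ closedBall 0 1) (hδ1 : δ ≤ 1) :
    (P.card : ℝ) ≤ C * (1 / δ) ^ s := by
  simpa [Set.inter_eq_left.mpr hP] using h 0 1 hδ1 le_rfl

theorem ncard_inter_closedBall_le (h : IsDeltaSet C δ s P) (hP : (P : Set (𝔼 n)) ⊆ closedBall 0 1)
    (hs : 0 ≤ s) (hδ : 0 < δ) (hδ1 : δ ≤ 1) (x : 𝔼 n) {r : ℝ} (hr : δ ≤ r) :
    (((P : Set (𝔼 n)) ∩ closedBall x r).ncard : ℝ) ≤ C * (r / δ) ^ s := by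
  rcases le_or_gt r 1 with hr1 | hr1
  · exact h x r hr hr1
  have := h.nonneg hδ hδ1
  calc (((P : Set (𝔼 n)) ∩ closedBall x r).ncard : ℝ) ≤ P.card := by
        rw [← Set.ncard_coe_finset]
        exact_mod_cast Set.ncard_le_ncard Set.inter_subset_left P.finite_toSet
    _ ≤ C * (1 / δ) ^ s := h.card_le hP hδ1
    _ ≤ C * (r / δ) ^ s := by gcongr

end IsDeltaSet

section EnergyBound

variable {n : ℕ} {P : Finset (𝔼 n)} {C δ s ε : ℝ}

open Finset in
theorem integral_energyCount_le_geom_sum (hn : n ≠ 0) (hP : (P : Set (𝔼 n)) ⊆ closedBall 0 1)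
    (hs : 0 ≤ s) (hδ : 0 < δ) (hδ1 : δ ≤ 1) (hPδ : IsDeltaSet C δ s P) {m : ℕ}
    (hm : δ⁻¹ < 2 ^ (m + 1)) :
    ∫ e, (energyCount δ (e : 𝔼 n) P : ℝ) ∂(sphereMeasure n) ≤
      2 * sphereCapConst n * C ^ 2 * δ ^ (-s) * ∑ k ∈ range (m + 3), ((2 : ℝ) ^ (s - 1)) ^ k := by
  set G := ∑ k ∈ range (m + 3), ((2 : ℝ) ^ (s - 1)) ^ k
  have hC := hPδ.nonneg hδ hδ1
  have hK := one_le_sphereCapConst (n := n)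
  have hG : 0 ≤ G := sum_nonneg fun k _ => by positivity
  have hdist : ∀ x ∈ P, ∀ y ∈ P, dist x y ≤ 2 ^ (m + 2) * δ := by
    intro x hx y hy
    have hx' := mem_closedBall_zero_iff.mp (hP hx)
    have hy' := mem_closedBall_zero_iff.mp (hP hy)
    have : 1 < 2 ^ (m + 1) * δ := (inv_lt_iff_one_lt_mul₀ hδ).mp hm
    calc dist x y ≤ ‖x‖ + ‖y‖ := dist_le_norm_add_norm x y
      _ ≤ 2 * (2 ^ (m + 1) * δ) := by linarith
      _ = 2 ^ (m + 2) * δ := by ring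
  calc ∫ e, (energyCount δ (e : 𝔼 n) P : ℝ) ∂(sphereMeasure n)
      ≤ ∑ x ∈ P, ∑ y ∈ P, sphereCapConst n * (δ / max (dist x y) δ) := by
        rw [integral_energyCount hn]
        gcongr with x _ y _
        exact sphereMeasure_real_abs_inner_sub_le hn x y hδ
    _ ≤ ∑ x ∈ P, sphereCapConst n * (2 * C * G) := by
        gcongr with x hx
        rw [← mul_sum]
        gcongr
        exact sum_div_max_dist_le P x hδ (hdist x hx)
          fun r hr => hPδ.ncard_inter_closedBall_le hP hs hδ hδ1 x hr
    _ = P.card * (sphereCapConst n * (2 * C * G)) := by rw [sum_const, nsmul_eq_mul]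
    _ ≤ C * (1 / δ) ^ s * (sphereCapConst n * (2 * C * G)) := by
        gcongr
        exact hPδ.card_le hP hδ1
    _ = _ := by
        rw [one_div, Real.inv_rpow hδ.le, Real.rpow_neg hδ.le]
        ring

theorem integral_energyCount_le_of_one_lt (hn : n ≠ 0) (hP : (P : Set (𝔼 n)) ⊆ closedBall 0 1)
    (hs : 1 < s) (hδ : 0 < δ) (hδ1 : δ ≤ 1) (hPδ : IsDeltaSet (δ ^ (-ε)) δ s P) :
    ∫ e, (energyCount δ (e : 𝔼 n) P : ℝ) ∂(sphereMeasure n) ≤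
      2 * sphereCapConst n * (8 ^ (s - 1) / (2 ^ (s - 1) - 1)) * δ ^ (1 - 2 * s - 2 * ε) := by
  obtain ⟨m, hm, hm'⟩ := exists_nat_pow_near ((one_le_inv₀ hδ).mpr hδ1) one_lt_two
  set q : ℝ := 2 ^ (s - 1)
  have hq : 1 < q := Real.one_lt_rpow one_lt_two (by linarith)
  have hqm : q ^ (m + 3) ≤ 8 ^ (s - 1) * δ ^ (1 - s) := by
    calc q ^ (m + 3) = ((2 : ℝ) ^ (m + 3)) ^ (s - 1) := Real.rpow_pow_comm zero_le_two _ _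
      _ ≤ (8 * δ⁻¹) ^ (s - 1) := by
        gcongr
        rw [pow_add]
        linarith
      _ = 8 ^ (s - 1) * δ ^ (1 - s) := by
        rw [Real.mul_rpow (by norm_num) (by positivity), Real.inv_rpow hδ.le,
          ← Real.rpow_neg hδ.le, neg_sub]
  have hG : ∑ k ∈ Finset.range (m + 3), q ^ k ≤ 8 ^ (s - 1) * δ ^ (1 - s) / (q - 1) := by
    rw [geom_sum_eq hq.ne']
    gcongr
    linarith
  have hK := one_le_sphereCapConst (n := n)
  have hexp : (δ ^ (-ε)) ^ 2 * δ ^ (-s) * δ ^ (1 - s) = δ ^ (1 - 2 * s - 2 * ε) := by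
    rw [sq, ← Real.rpow_add hδ, ← Real.rpow_add hδ, ← Real.rpow_add hδ]
    ring_nf
  calc _ ≤ 2 * sphereCapConst n * (δ ^ (-ε)) ^ 2 * δ ^ (-s) * ∑ k ∈ Finset.range (m + 3), q ^ k :=
        integral_energyCount_le_geom_sum hn hP (by linarith) hδ hδ1 hPδ hm'
    _ ≤ 2 * sphereCapConst n * (δ ^ (-ε)) ^ 2 * δ ^ (-s) *
        (8 ^ (s - 1) * δ ^ (1 - s) / (q - 1)) := by gcongr
    _ = _ := by
      rw [← hexp]
      ring

theorem integral_energyCount_le_of_le_one (hn : n ≠ 0) (hP : (P : Set (𝔼 n)) ⊆ closedBall 0 1)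
    (hs : 0 ≤ s) (hs1 : s ≤ 1) (hδ : 0 < δ) (hδ1 : δ ≤ 1) (hPδ : IsDeltaSet (δ ^ (-ε)) δ s P)
    (hscales : ∀ m : ℕ, 2 ^ m ≤ δ⁻¹ → (m : ℝ) + 3 ≤ δ ^ (-ε)) :
    ∫ e, (energyCount δ (e : 𝔼 n) P : ℝ) ∂(sphereMeasure n) ≤
      2 * sphereCapConst n * δ ^ (-s - 3 * ε) := by
  obtain ⟨m, hm, hm'⟩ := exists_nat_pow_near ((one_le_inv₀ hδ).mpr hδ1) one_lt_two
  have hG : ∑ k ∈ Finset.range (m + 3), ((2 : ℝ) ^ (s - 1)) ^ k ≤ δ ^ (-ε) := by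
    calc ∑ k ∈ Finset.range (m + 3), ((2 : ℝ) ^ (s - 1)) ^ k
        ≤ ∑ k ∈ Finset.range (m + 3), (1 : ℝ) := by
          gcongr
          exact pow_le_one₀ (by positivity)
            (Real.rpow_le_one_of_one_le_of_nonpos one_le_two (by linarith))
      _ ≤ δ ^ (-ε) := by simpa using hscales m hm
  have hK := one_le_sphereCapConst (n := n)
  have hexp : (δ ^ (-ε)) ^ 2 * δ ^ (-s) * δ ^ (-ε) = δ ^ (-s - 3 * ε) := by
    rw [sq, ← Real.rpow_add hδ, ← Real.rpow_add hδ, ← Real.rpow_add hδ]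
    ring_nf
  calc _ ≤ 2 * sphereCapConst n * (δ ^ (-ε)) ^ 2 * δ ^ (-s) *
        ∑ k ∈ Finset.range (m + 3), ((2 : ℝ) ^ (s - 1)) ^ k :=
        integral_energyCount_le_geom_sum hn hP hs hδ hδ1 hPδ hm'
    _ ≤ 2 * sphereCapConst n * (δ ^ (-ε)) ^ 2 * δ ^ (-s) * δ ^ (-ε) := by gcongr
    _ = _ := by
      rw [← hexp]
      ring

end EnergyBound

theorem statement6_general (n : ℕ) (hn : 2 ≤ n) (s : ℝ) (hs0 : 0 ≤ s) :
    ∃ C ≥ (1 : ℝ), ∀ ε : ℝ, 0 < ε → ∃ δ0 > (0 : ℝ), ∀ δ : ℝ, 0 < δ → δ < δ0 →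
      ∀ P : Finset (EuclideanSpace ℝ (Fin n)),
        (P : Set (EuclideanSpace ℝ (Fin n))) ⊆ closedBall 0 1 →
        IsDeltaSet (δ ^ (-ε)) δ s P →
        ((1 < s →
            ∫ e, (energyCount δ (e : EuclideanSpace ℝ (Fin n)) P : ℝ) ∂(sphereMeasure n) ≤
              C * δ ^ (1 - 2 * s - 2 * ε)) ∧
         (s ≤ 1 →
            ∫ e, (energyCount δ (e : EuclideanSpace ℝ (Fin n)) P : ℝ) ∂(sphereMeasure n) ≤
              C * δ ^ (-s - 3 * ε))) := by
  have hn0 : n ≠ 0 := by omega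
  have hK := one_le_sphereCapConst (n := n)
  have hM := le_max_left 1 ((8 : ℝ) ^ (s - 1) / (2 ^ (s - 1) - 1))
  refine ⟨2 * sphereCapConst n * max 1 (8 ^ (s - 1) / (2 ^ (s - 1) - 1)), by nlinarith,
    fun ε hε => ?_⟩
  obtain ⟨δ0, hδ0, hsmall⟩ :=
    (nhdsGT_basis (0 : ℝ)).eventually_iff.mp (eventually_natCast_add_three_le_rpow_neg hε)
  refine ⟨min δ0 1, lt_min hδ0 one_pos, fun δ hδ hδlt P hP hPδ => ?_⟩
  have hδ1 : δ ≤ 1 := (hδlt.trans_le (min_le_right _ _)).le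
  refine ⟨fun hs1 => ?_, fun hs1 => ?_⟩
  · calc _ ≤ _ := integral_energyCount_le_of_one_lt hn0 hP hs1 hδ hδ1 hPδ
      _ ≤ _ := by
        gcongr
        exact le_max_right _ _
  · calc _ ≤ _ := integral_energyCount_le_of_le_one hn0 hP hs0 hs1 hδ hδ1 hPδ
          (hsmall ⟨hδ, hδlt.trans_le (min_le_left _ _)⟩)
      _ ≤ _ := by
        rw [mul_assoc _ (max _ _)]
        gcongr
        exact le_mul_of_one_le_left (by positivity) hM

/-- Integral energy estimate: for a `(δ^{-ε},δ,s)`-set `P ⊆ B(0,1)`,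
`∫ E_e(P) dσ(e) ≤ C δ^{1-2s-2ε}` if `1 < s`, and `≤ C δ^{-s-3ε}` if `s ≤ 1`. -/
theorem statement6 (n : ℕ) (hn : 2 ≤ n) (s : ℝ) (hs0 : 0 ≤ s) (hsn : s ≤ n) :
    ∃ C ≥ (1 : ℝ), ∀ ε : ℝ, 0 < ε → ∃ δ0 > (0 : ℝ), ∀ δ : ℝ, 0 < δ → δ < δ0 →
      ∀ P : Finset (EuclideanSpace ℝ (Fin n)),
        (P : Set (EuclideanSpace ℝ (Fin n))) ⊆ closedBall 0 1 →
        IsDeltaSet (δ ^ (-ε)) δ s P →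
        ((1 < s →
            ∫ e, (energyCount δ (e : EuclideanSpace ℝ (Fin n)) P : ℝ) ∂(sphereMeasure n) ≤
              C * δ ^ (1 - 2 * s - 2 * ε)) ∧
         (s ≤ 1 →
            ∫ e, (energyCount δ (e : EuclideanSpace ℝ (Fin n)) P : ℝ) ∂(sphereMeasure n) ≤
              C * δ ^ (-s - 3 * ε))) :=
  statement6_general n hn s hs0
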